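/- The three-player Nim position consisting of n heaps of size 1 together with one heap of size 2 is an N-game if n ≡ 0 or 2 mod 3, and a Q-game if n ≡ 1 mod 3. -/
import Mathlib


/-- Three-player impartial games: well-founded game trees. -/
inductive G3 : Type 1 where
  | mk : (ι : Type) → (ι → G3) → G3

namespace G3

/-- The index type of options (moves) of a game. -/
def moves : G3 → Type
  | mk ι _ => ι

/-- The option of a game corresponding to a move. -/
def moveFn : (g : G3) → moves g → G3
  | mk _ f => f

/-- Disjunctive sum: move in exactly one component. -/
noncomputable def add : G3 → G3 → G3 :=
  G3.rec (fun ι f ihf =>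
    G3.rec (fun κ g ihg =>
      mk (ι ⊕ κ) (fun x =>
        match x with
        | Sum.inl i => ihf i (mk κ g)
        | Sum.inr j => ihg j)))

/-- The four outcome types of a three-player impartial game. -/
inductive PType : Type
  | N | O | P | Q
deriving DecidableEq

open Classical in
/-- The type of a game: `N` iff some option is a `P`-game; `O` iff it has at least
one option and all options are `N`-games; `P` iff all options are `O`-games;
`Q` otherwise. -/
noncomputable def typ : G3 → PType
  | mk ι f =>
    if ∃ i, typ (f i) = PType.P then PType.N
    else if Nonempty ι ∧ ∀ i, typ (f i) = PType.N then PType.O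
    else if ∀ i, typ (f i) = PType.O then PType.P
    else PType.Q

/-- The Nim heap of size `n`: options are heaps of sizes `0, …, n-1`. -/
def nim : ℕ → G3
  | n => mk (Fin n) (fun i => nim i)
termination_by n => n
decreasing_by exact i.isLt

/-- The sum of `n` Nim heaps of size 1. -/
noncomputable def ones : ℕ → G3
  | 0 => nim 0
  | n + 1 => add (ones n) (nim 1)


theorem add_def (ι κ : Type) (f : ι → G3) (g : κ → G3) :
    add (mk ι f) (mk κ g) = mk (ι ⊕ κ) (fun x =>
      match x with
      | Sum.inl i => add (f i) (mk κ g)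
      | Sum.inr j => add (mk ι f) (g j)) := rfl

theorem nim_def (n : ℕ) : nim n = mk (Fin n) (fun i => nim i.val) := by rw [nim]

open Classical in
theorem typ_mk (ι : Type) (f : ι → G3) :
    typ (mk ι f) =
    (if ∃ i, typ (f i) = PType.P then PType.N
    else if Nonempty ι ∧ ∀ i, typ (f i) = PType.N then PType.O
    else if ∀ i, typ (f i) = PType.O then PType.P
    else PType.Q) := by rw [typ]


/-- Structural isomorphism of game trees. -/
inductive Ident : G3 → G3 → Prop where
  | mk {ι κ : Type} (f : ι → G3) (g : κ → G3) (e : ι ≃ κ)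
      (h : ∀ i, Ident (f i) (g (e i))) : Ident (mk ι f) (mk κ g)

theorem Ident.refl : ∀ g, Ident g g := by
  intro g
  induction g with
  | mk ι f ih => exact Ident.mk f f (Equiv.refl ι) ih

theorem typ_ident : ∀ {a b : G3}, Ident a b → typ a = typ b := by
  intro a b h
  induction h with
  | @mk ι κ f g e h ih =>
    classical
    rw [typ_mk, typ_mk]
    have h1 : (∃ i, typ (f i) = PType.P) ↔ (∃ j, typ (g j) = PType.P) := by
      constructor
      · rintro ⟨i, hi⟩; exact ⟨e i, by rw [← ih i]; exact hi⟩
      · rintro ⟨j, hj⟩; exact ⟨e.symm j, by rw [ih (e.symm j), e.apply_symm_apply]; exact hj⟩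
    have h2 : (∀ i, typ (f i) = PType.N) ↔ (∀ j, typ (g j) = PType.N) := by
      constructor
      · intro H j; rw [← e.apply_symm_apply j, ← ih]; exact H _
      · intro H i; rw [ih]; exact H _
    have h3 : (∀ i, typ (f i) = PType.O) ↔ (∀ j, typ (g j) = PType.O) := by
      constructor
      · intro H j; rw [← e.apply_symm_apply j, ← ih]; exact H _
      · intro H i; rw [ih]; exact H _
    exact if_congr h1 rfl (if_congr (and_congr e.nonempty_congr h2) rfl
      (if_congr h3 rfl rfl))

theorem add_ident : ∀ {a b : G3}, Ident a b → ∀ {c d : G3}, Ident c d →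
    Ident (add a c) (add b d) := by
  intro a b hab
  induction hab with
  | @mk ι κ f g e h ih =>
    intro c d hcd
    induction hcd with
    | @mk ι' κ' f' g' e' h' ih' =>
      rw [add_def, add_def]
      refine Ident.mk _ _ (Equiv.sumCongr e e') (fun x => ?_)
      cases x with
      | inl i => exact ih i (Ident.mk f' g' e' h')
      | inr j => exact ih' j

theorem add_nim_zero : ∀ g : G3, Ident (add g (nim 0)) g := by
  intro g
  induction g with
  | mk ι f ih =>
    rw [nim_def, add_def]
    refine Ident.mk _ _ (Equiv.sumEmpty ι (Fin 0)) (fun x => ?_)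
    cases x with
    | inl i => exact nim_def 0 ▸ ih i
    | inr j => exact j.elim0


theorem ones_struct : ∀ n : ℕ, ∃ (ι : Type) (f : ι → G3),
    ones (n+1) = mk ι f ∧ Nonempty ι ∧ ∀ i, Ident (f i) (ones n) := by
  intro n
  induction n with
  | zero =>
    have hmk : ones 1 = add (nim 0) (nim 1) := rfl
    rw [nim_def 0, nim_def 1, add_def] at hmk
    refine ⟨_, _, hmk, ⟨Sum.inr 0⟩, ?_⟩
    rintro (i | j)
    · exact i.elim0
    · show Ident (add (mk (Fin 0) fun k => nim k.val) (nim j.val)) (ones 0)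
      have hj : (j : ℕ) = 0 := by omega
      rw [hj, ← nim_def 0]
      exact add_nim_zero _
  | succ m ih =>
    obtain ⟨ι, f, hmk, hne, hopt⟩ := ih
    have hmk2 : ones (m+2) = add (mk ι f) (nim 1) := by
      show add (ones (m+1)) (nim 1) = _; rw [hmk]
    rw [nim_def 1, add_def] at hmk2
    refine ⟨_, _, hmk2, ⟨Sum.inr 0⟩, ?_⟩
    rintro (i | j)
    · show Ident (add (f i) (mk (Fin 1) fun k => nim k.val)) (ones (m+1))
      rw [← nim_def 1]
      exact add_ident (hopt i) (Ident.refl (nim 1))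
    · show Ident (add (mk ι f) (nim j.val)) (ones (m+1))
      have hj : (j : ℕ) = 0 := by omega
      rw [hj, ← hmk]
      exact add_nim_zero _

theorem typ_ones (n : ℕ) : typ (ones n) =
    (if n % 3 = 0 then PType.P else if n % 3 = 1 then PType.N else PType.O) := by
  induction n with
  | zero =>
    show typ (nim 0) = _
    rw [nim_def 0, typ_mk]
    simp [Fin.isEmpty']
  | succ m ih =>
    obtain ⟨ι, f, hmk, hne, hopt⟩ := ones_struct m
    have hall : ∀ i, typ (f i) = typ (ones m) := fun i => typ_ident (hopt i)
    rw [hmk, typ_mk]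
    have h3 : m % 3 = 0 ∨ m % 3 = 1 ∨ m % 3 = 2 := by omega
    rcases h3 with h | h | h
    · rw [h] at ih; norm_num at ih
      have h1 : (m+1) % 3 = 1 := by omega
      rw [if_pos ⟨hne.some, by rw [hall, ih]⟩, h1]
      norm_num
    · rw [h] at ih; norm_num at ih
      have h1 : (m+1) % 3 = 2 := by omega
      simp only [ih] at hall
      rw [if_neg (by rintro ⟨i, hi⟩; rw [hall] at hi; exact absurd hi (by decide)),
        if_pos ⟨hne, hall⟩, h1]
      norm_num
    · rw [h] at ih; norm_num at ih
      have h1 : (m+1) % 3 = 0 := by omega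
      simp only [ih] at hall
      rw [if_neg (by rintro ⟨i, hi⟩; rw [hall] at hi; exact absurd hi (by decide)),
        if_neg (by rintro ⟨-, hN⟩; have := hN hne.some; rw [hall] at this; exact absurd this (by decide)),
        if_pos hall, h1]
      norm_num

theorem typ_sum (n : ℕ) : typ (add (ones n) (nim 2)) =
    (if n % 3 = 1 then PType.Q else PType.N) := by
  induction n with
  | zero =>
    have hmk : ones 0 = mk (Fin 0) (fun k => nim k.val) := nim_def 0
    have hmk2 : add (ones 0) (nim 2) =
        add (mk (Fin 0) fun k => nim k.val) (mk (Fin 2) fun k => nim k.val) := by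
      rw [← hmk, ← nim_def 2]
    rw [add_def] at hmk2
    have t0 : typ (add (mk (Fin 0) fun k => nim k.val) (nim 0)) = typ (ones 0) := by
      rw [← hmk]; exact typ_ident (add_nim_zero _)
    rw [hmk2, typ_mk]
    rw [if_pos ⟨Sum.inr ⟨0, by norm_num⟩, by
      show typ (add (mk (Fin 0) fun k => nim k.val) (nim 0)) = PType.P
      rw [t0, typ_ones]; norm_num⟩]
    norm_num
  | succ m ih =>
    obtain ⟨ι, f, hmk, hne, hopt⟩ := ones_struct m
    have hmk2 : add (ones (m+1)) (nim 2) =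
        add (mk ι f) (mk (Fin 2) fun k => nim k.val) := by
      rw [← hmk, ← nim_def 2]
    rw [add_def] at hmk2
    have t0 : typ (add (mk ι f) (nim 0)) = typ (ones (m+1)) := by
      rw [← hmk]; exact typ_ident (add_nim_zero _)
    have t1 : typ (add (mk ι f) (nim 1)) = typ (ones (m+2)) := by
      rw [← hmk]; rfl
    have tl : ∀ i, typ (add (f i) (mk (Fin 2) fun k => nim k.val)) =
        typ (add (ones m) (nim 2)) := by
      intro i
      rw [← nim_def 2]
      exact typ_ident (add_ident (hopt i) (Ident.refl _))
    rw [hmk2, typ_mk]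
    have h3 : m % 3 = 0 ∨ m % 3 = 1 ∨ m % 3 = 2 := by omega
    rcases h3 with h | h | h
    · -- (m+1) % 3 = 1 : Q
      have h1 : (m+1) % 3 = 1 := by omega
      have h2 : (m+2) % 3 = 2 := by omega
      have vl : ∀ i, typ (add (f i) (mk (Fin 2) fun k => nim k.val)) = PType.N := by
        intro i; rw [tl i, ih]; simp [h]
      have v0 : typ (add (mk ι f) (nim 0)) = PType.N := by
        rw [t0, typ_ones]; simp [h1]
      have v1 : typ (add (mk ι f) (nim 1)) = PType.O := by
        rw [t1, typ_ones]; simp [h2]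
      rw [if_neg ?c1, if_neg ?c2, if_neg ?c3, h1]
      case c1 =>
        rintro ⟨x | j, hx⟩
        · replace hx : typ (add (f x) (mk (Fin 2) fun k => nim k.val)) = PType.P := hx
          rw [vl x] at hx; exact PType.noConfusion hx
        · obtain ⟨jv, hj⟩ := j
          interval_cases jv
          · replace hx : typ (add (mk ι f) (nim 0)) = PType.P := hx
            rw [v0] at hx; exact PType.noConfusion hx
          · replace hx : typ (add (mk ι f) (nim 1)) = PType.P := hx
            rw [v1] at hx; exact PType.noConfusion hx
      case c2 =>
        rintro ⟨-, hN⟩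
        have hx := hN (Sum.inr ⟨1, by norm_num⟩)
        replace hx : typ (add (mk ι f) (nim 1)) = PType.N := hx
        rw [v1] at hx; exact PType.noConfusion hx
      case c3 =>
        intro hO
        have hx := hO (Sum.inr ⟨0, by norm_num⟩)
        replace hx : typ (add (mk ι f) (nim 0)) = PType.O := hx
        rw [v0] at hx; exact PType.noConfusion hx
      norm_num
    · -- (m+1) % 3 = 2 : N, option inr 1 has type P
      have h2 : (m+2) % 3 = 0 := by omega
      rw [if_pos ⟨Sum.inr ⟨1, by norm_num⟩, by
        show typ (add (mk ι f) (nim 1)) = PType.P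
        rw [t1, typ_ones]; simp [h2]⟩]
      have h1 : (m+1) % 3 = 2 := by omega
      simp [h1]
    · -- (m+1) % 3 = 0 : N, option inr 0 has type P
      have h1 : (m+1) % 3 = 0 := by omega
      rw [if_pos ⟨Sum.inr ⟨0, by norm_num⟩, by
        show typ (add (mk ι f) (nim 0)) = PType.P
        rw [t0, typ_ones]; simp [h1]⟩]
      simp [h1]

theorem ones_plus_two_type (n : ℕ) :
    ((n % 3 = 0 ∨ n % 3 = 2) → typ (add (ones n) (nim 2)) = PType.N) ∧
    (n % 3 = 1 → typ (add (ones n) (nim 2)) = PType.Q) := by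
  rw [typ_sum]
  constructor
  · rintro (h | h) <;> simp [h]
  · intro h; simp [h]

end G3
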